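/- For the recursively defined sequence (f_n) with n ≥ 1, the maximum of f_n over [0,t_n] is attained at t_{n-1}: max_{t∈[0,t_n]} f_n(t) = f_n(t_{n-1}). -/

import Mathlib

open MeasureTheory Set

/-- Antisymmetrized extension: `f̃_{n+1}` built from `f_n = g` with times `tn = t_n`, `tn1 = t_{n+1}`. -/
noncomputable def ftilde (g : ℝ → ℝ) (tn tn1 : ℝ) (t : ℝ) : ℝ :=
  if 0 ≤ t ∧ t ≤ tn then g t
  else if tn1 - tn ≤ t ∧ t ≤ tn1 then -g (tn1 - t)
  else 0

/-- The recursively defined sequence `f_n` (with `f_0 ≡ c`). -/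
noncomputable def fseq (ts : ℕ → ℝ) (c : ℝ) : ℕ → ℝ → ℝ
  | 0 => fun _ => c
  | n + 1 => fun t => ∫ s in (0:ℝ)..t, ftilde (fseq ts c n) (ts n) (ts (n + 1)) s

lemma ftilde_meas {g : ℝ → ℝ} (hg : Measurable g) (a b : ℝ) :
    Measurable (ftilde g a b) := by
  unfold ftilde
  have h1 : MeasurableSet {t : ℝ | 0 ≤ t ∧ t ≤ a} := by
    have : {t : ℝ | 0 ≤ t ∧ t ≤ a} = Icc 0 a := rfl
    rw [this]; exact measurableSet_Icc
  have h2 : MeasurableSet {t : ℝ | b - a ≤ t ∧ t ≤ b} := by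
    have : {t : ℝ | b - a ≤ t ∧ t ≤ b} = Icc (b - a) b := rfl
    rw [this]; exact measurableSet_Icc
  exact Measurable.ite h1 hg
    (Measurable.ite h2 ((hg.comp (measurable_const.sub measurable_id)).neg) measurable_const)

lemma ftilde_bound {g : ℝ → ℝ} (hg : Continuous g) (a b : ℝ) :
    ∃ C : ℝ, ∀ t, |ftilde g a b t| ≤ C := by
  obtain ⟨C, hC⟩ := (isCompact_Icc (a := (0:ℝ)) (b := a)).exists_bound_of_continuousOn
    hg.continuousOn
  refine ⟨max C 0, fun t => ?_⟩
  unfold ftilde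
  split_ifs with h1 h2
  · exact le_max_of_le_left (by simpa using hC t ⟨h1.1, h1.2⟩)
  · rw [abs_neg]
    refine le_max_of_le_left (by simpa using hC (b - t) ⟨by linarith [h2.2], by linarith [h2.1]⟩)
  · simp

lemma ftilde_intInt {g : ℝ → ℝ} (hg : Continuous g) (a b u v : ℝ) :
    IntervalIntegrable (ftilde g a b) volume u v := by
  obtain ⟨C, hC⟩ := ftilde_bound hg a b
  rw [intervalIntegrable_iff]
  refine Integrable.mono' (g := fun _ => C) (integrableOn_const measure_Ioc_lt_top.ne)
    ((ftilde_meas hg.measurable a b).aestronglyMeasurable.restrict)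
    (ae_of_all _ fun t => ?_)
  simpa [Real.norm_eq_abs] using hC t

lemma fseq_cont (ts : ℕ → ℝ) (c : ℝ) : ∀ n, Continuous (fseq ts c n)
  | 0 => continuous_const
  | (n + 1) => by
    have h := fseq_cont ts c n
    have : Continuous fun t => ∫ s in (0:ℝ)..t, ftilde (fseq ts c n) (ts n) (ts (n + 1)) s :=
      intervalIntegral.continuous_primitive (fun u v => ftilde_intInt h _ _ u v) 0
    simpa [fseq] using this

section main

variable (ts : ℕ → ℝ) (c : ℝ) (hc : 0 < c) (ht0 : 0 < ts 0)
  (hts : ∀ n, 2 * ts n ≤ ts (n + 1))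

include ht0 hts in
lemma ts_pos : ∀ n, 0 < ts n
  | 0 => ht0
  | (n + 1) => lt_of_lt_of_le (by linarith [ts_pos n]) (hts n)

include hc ht0 hts in
lemma fseq_nonneg : ∀ n, ∀ t ∈ Icc (0:ℝ) (ts n), 0 ≤ fseq ts c n t := by
  intro n
  induction n with
  | zero => intro t _; simp [fseq]; exact hc.le
  | succ n ih =>
    intro t ht
    set a := ts n with ha_def
    set b := ts (n + 1) with hb_def
    have ha : 0 < a := ts_pos ts ht0 hts n
    have hab : 2 * a ≤ b := hts n
    have hcont := fseq_cont ts c n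
    set g := fseq ts c n with hg_def
    set ff := ftilde g a b with hff_def
    have hint : ∀ u v, IntervalIntegrable ff volume u v := fun u v => ftilde_intInt hcont a b u v
    have hff_nonpos : ∀ s ∈ Ioc a b, ff s ≤ 0 := by
      intro s hs
      rw [hff_def]
      unfold ftilde
      rw [if_neg (by push_neg; intro _; linarith [hs.1])]
      split_ifs with h2
      · have : 0 ≤ g (b - s) := ih (b - s) ⟨by linarith [h2.2], by linarith [h2.1]⟩
        linarith
      · exact le_refl 0
    -- total integral is zero
    have hI1 : (∫ s in (0:ℝ)..a, ff s) = ∫ s in (0:ℝ)..a, g s := by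
      apply intervalIntegral.integral_congr
      intro s hs
      rw [uIcc_of_le ha.le] at hs
      rw [hff_def]; unfold ftilde; rw [if_pos ⟨hs.1, hs.2⟩]
    have hI2 : (∫ s in a..(b - a), ff s) = 0 := by
      rw [intervalIntegral.integral_of_le (by linarith), integral_Ioc_eq_integral_Ioo]
      rw [setIntegral_congr_fun measurableSet_Ioo (g := fun _ => (0:ℝ)) ?_, integral_zero]
      intro s hs
      rw [hff_def]; unfold ftilde
      rw [if_neg (by push_neg; intro _; linarith [hs.1]), if_neg (by push_neg; intro h; linarith [hs.2])]
    have hI3 : (∫ s in (b - a)..b, ff s) = -∫ s in (0:ℝ)..a, g s := by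
      have e1 : (∫ s in (b - a)..b, ff s) = ∫ s in (b - a)..b, -g (b - s) := by
        rw [intervalIntegral.integral_of_le (by linarith),
          intervalIntegral.integral_of_le (by linarith)]
        apply setIntegral_congr_fun measurableSet_Ioc
        intro s hs
        rw [hff_def]; unfold ftilde
        rw [if_neg (by push_neg; intro _; linarith [hs.1]), if_pos ⟨hs.1.le, hs.2⟩]
      rw [e1, intervalIntegral.integral_neg, intervalIntegral.integral_comp_sub_left g b]
      norm_num
    have hFb : fseq ts c (n + 1) b = 0 := by
      have s1 : (∫ s in (0:ℝ)..a, ff s) + (∫ s in a..(b - a), ff s) = ∫ s in (0:ℝ)..(b - a), ff s :=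
        intervalIntegral.integral_add_adjacent_intervals (hint _ _) (hint _ _)
      have s2 : (∫ s in (0:ℝ)..(b - a), ff s) + (∫ s in (b - a)..b, ff s) =
          ∫ s in (0:ℝ)..b, ff s :=
        intervalIntegral.integral_add_adjacent_intervals (hint _ _) (hint _ _)
      simp only [fseq]
      rw [← hb_def, ← ha_def, ← hg_def, ← hff_def, ← s2, ← s1, hI1, hI2, hI3]
      ring
    rcases le_total t a with hta | hta
    · simp only [fseq]
      rw [← hb_def, ← ha_def, ← hg_def, ← hff_def]
      apply intervalIntegral.integral_nonneg ht.1
      intro s hs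
      have hsa : s ∈ Icc (0:ℝ) a := ⟨hs.1, le_trans hs.2 hta⟩
      rw [hff_def]; unfold ftilde
      rw [if_pos ⟨hsa.1, hsa.2⟩]
      exact ih s hsa
    · have hsplit : (∫ s in (0:ℝ)..t, ff s) + (∫ s in t..b, ff s) = ∫ s in (0:ℝ)..b, ff s :=
        intervalIntegral.integral_add_adjacent_intervals (hint _ _) (hint _ _)
      have htb : (∫ s in t..b, ff s) ≤ 0 := by
        rw [intervalIntegral.integral_of_le ht.2]
        apply setIntegral_nonpos measurableSet_Ioc
        intro s hs
        exact hff_nonpos s ⟨lt_of_le_of_lt hta hs.1, hs.2⟩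
      have hFb' : (∫ s in (0:ℝ)..b, ff s) = 0 := by
        have := hFb
        simp only [fseq] at this
        rw [← hb_def, ← ha_def, ← hg_def, ← hff_def] at this
        exact this
      simp only [fseq]
      rw [← hb_def, ← ha_def, ← hg_def, ← hff_def]
      linarith

end main

theorem fseq_max_at_prev_time (ts : ℕ → ℝ) (c : ℝ) (hc : 0 < c) (ht0 : 0 < ts 0)
    (hts : ∀ n, 2 * ts n ≤ ts (n + 1)) :
    ∀ n : ℕ, ∀ t ∈ Set.Icc (0 : ℝ) (ts (n + 1)),
      fseq ts c (n + 1) t ≤ fseq ts c (n + 1) (ts n) := by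
  intro n t ht
  set a := ts n with ha_def
  set b := ts (n + 1) with hb_def
  have ha : 0 < a := ts_pos ts ht0 hts n
  have hab : 2 * a ≤ b := hts n
  have hcont := fseq_cont ts c n
  set g := fseq ts c n with hg_def
  set ff := ftilde g a b with hff_def
  have hint : ∀ u v, IntervalIntegrable ff volume u v := fun u v => ftilde_intInt hcont a b u v
  have hnn := fseq_nonneg ts c hc ht0 hts n
  rw [← ha_def, ← hg_def] at hnn
  simp only [fseq]
  rw [← hb_def, ← ha_def, ← hg_def, ← hff_def]
  rcases le_total t a with hta | hta
  · have hsplit : (∫ s in (0:ℝ)..t, ff s) + (∫ s in t..a, ff s) = ∫ s in (0:ℝ)..a, ff s :=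
      intervalIntegral.integral_add_adjacent_intervals (hint _ _) (hint _ _)
    have hpos : 0 ≤ ∫ s in t..a, ff s := by
      apply intervalIntegral.integral_nonneg hta
      intro s hs
      have hsa : s ∈ Icc (0:ℝ) a := ⟨le_trans ht.1 hs.1, hs.2⟩
      rw [hff_def]; unfold ftilde
      rw [if_pos ⟨hsa.1, hsa.2⟩]
      exact hnn s hsa
    linarith
  · have hsplit : (∫ s in (0:ℝ)..a, ff s) + (∫ s in a..t, ff s) = ∫ s in (0:ℝ)..t, ff s :=
      intervalIntegral.integral_add_adjacent_intervals (hint _ _) (hint _ _)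
    have hneg : (∫ s in a..t, ff s) ≤ 0 := by
      rw [intervalIntegral.integral_of_le hta]
      apply setIntegral_nonpos measurableSet_Ioc
      intro s hs
      rw [hff_def]
      unfold ftilde
      rw [if_neg (by push_neg; intro _; linarith [hs.1])]
      split_ifs with h2
      · have : 0 ≤ g (b - s) := hnn (b - s) ⟨by linarith [h2.2, ht.2, hs.2], by linarith [h2.1]⟩
        linarith
      · exact le_refl 0
    linarith
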